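/- Let R be a quasi-unital ring, and let i : R → R' be a morphism of non-unital rings such that R' is smooth as an R-bimodule (i.e., both R ⊗_R R' → R' and R' ⊗_R R → R' are isomorphisms, and the two-sided smoothening R ⊗_R R' ⊗_R R → R' is an isomorphism). Then R' is itself quasi-unital: R' ⊗_{R'} R' → R' is an isomorphism. -/

import Mathlib

open TensorProduct LinearMap

section Bar

variable (A : Type) [NonUnitalRing A] [Module ℂ A] [SMulCommClass ℂ A A]
  [IsScalarTower ℂ A A]

/-- The bar differential `A ⊗ A ⊗ A → A ⊗ A`. -/
noncomputable def barD : (A ⊗[ℂ] (A ⊗[ℂ] A)) →ₗ[ℂ] A ⊗[ℂ] A :=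
  (rTensor A (mul' ℂ A)) ∘ₗ (TensorProduct.assoc ℂ A A A).symm.toLinearMap
    - lTensor A (mul' ℂ A)

/-- `A` is quasi-unital: the canonical map `A ⊗_A A → A` is an isomorphism. -/
def IsQuasiUnital : Prop :=
  ∃ f : ((A ⊗[ℂ] A) ⧸ LinearMap.range (barD A)) →ₗ[ℂ] A,
    f ∘ₗ (LinearMap.range (barD A)).mkQ = mul' ℂ A ∧ Function.Bijective f

end Bar

section Ext

variable (R R' : Type)
  [NonUnitalRing R] [Module ℂ R] [SMulCommClass ℂ R R] [IsScalarTower ℂ R R]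
  [NonUnitalRing R'] [Module ℂ R'] [SMulCommClass ℂ R' R'] [IsScalarTower ℂ R' R']
  (i : R →ₗ[ℂ] R')

/-- The left action `R ⊗ R' → R'`, `r ⊗ r' ↦ i(r)·r'`. -/
noncomputable def actL : R ⊗[ℂ] R' →ₗ[ℂ] R' := (mul' ℂ R') ∘ₗ rTensor R' i

/-- The right action `R' ⊗ R → R'`, `r' ⊗ r ↦ r'·i(r)`. -/
noncomputable def actR : R' ⊗[ℂ] R →ₗ[ℂ] R' := (mul' ℂ R') ∘ₗ lTensor R' i

/-- The bar differential `R ⊗ R ⊗ R' → R ⊗ R'` for the left `R`-module `R'`. -/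
noncomputable def barDL : (R ⊗[ℂ] (R ⊗[ℂ] R')) →ₗ[ℂ] R ⊗[ℂ] R' :=
  (rTensor R' (mul' ℂ R)) ∘ₗ (TensorProduct.assoc ℂ R R R').symm.toLinearMap
    - lTensor R (actL R R' i)

/-- The bar differential `R' ⊗ R ⊗ R → R' ⊗ R` for the right `R`-module `R'`. -/
noncomputable def barDR : (R' ⊗[ℂ] (R ⊗[ℂ] R)) →ₗ[ℂ] R' ⊗[ℂ] R :=
  (rTensor R (actR R R' i)) ∘ₗ (TensorProduct.assoc ℂ R' R R).symm.toLinearMap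
    - lTensor R' (mul' ℂ R)

/-- The left relation differential `R ⊗ R ⊗ (R' ⊗ R) → R ⊗ (R' ⊗ R)` used for the
two-sided relative tensor product `R ⊗_R R' ⊗_R R`. -/
noncomputable def barDT₁ : (R ⊗[ℂ] (R ⊗[ℂ] (R' ⊗[ℂ] R))) →ₗ[ℂ] R ⊗[ℂ] (R' ⊗[ℂ] R) :=
  (rTensor (R' ⊗[ℂ] R) (mul' ℂ R)) ∘ₗ
      (TensorProduct.assoc ℂ R R (R' ⊗[ℂ] R)).symm.toLinearMap
    - lTensor R ((rTensor R (actL R R' i)) ∘ₗ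
        (TensorProduct.assoc ℂ R R' R).symm.toLinearMap)

/-- The right relation differential `R ⊗ (R' ⊗ R ⊗ R) → R ⊗ (R' ⊗ R)` used for the
two-sided relative tensor product `R ⊗_R R' ⊗_R R`. -/
noncomputable def barDT₂ : (R ⊗[ℂ] (R' ⊗[ℂ] (R ⊗[ℂ] R))) →ₗ[ℂ] R ⊗[ℂ] (R' ⊗[ℂ] R) :=
  lTensor R (barDR R R' i)

/-- The relations submodule for `R ⊗_R R' ⊗_R R`. -/
noncomputable def twoSidedRel : Submodule ℂ (R ⊗[ℂ] (R' ⊗[ℂ] R)) :=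
  LinearMap.range (barDT₁ R R' i) ⊔ LinearMap.range (barDT₂ R R' i)

/-- The two-sided action map `R ⊗ R' ⊗ R → R'`, `r ⊗ r' ⊗ s ↦ i(r)·r'·i(s)`. -/
noncomputable def actT : (R ⊗[ℂ] (R' ⊗[ℂ] R)) →ₗ[ℂ] R' :=
  (actL R R' i) ∘ₗ lTensor R (actR R R' i)

/-
The map `r ⊗ x ⊗ s ↦ i(r)·x ⊗ i(s)` descends to `g : R ⊗_R R' ⊗_R R → R' ⊗_{R'} R'`, and
composed with the multiplication `m : R' ⊗_{R'} R' → R'` it is the two-sided smoothening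
isomorphism. So `m` is bijective as soon as `g` is onto, and it is: smoothness gives
`R' = i(R)·R' = R'·i(R)`, and `i(r)·x ⊗ y·i(s) ≡ i(r)·(x·y) ⊗ i(s) = g(r ⊗ x·y ⊗ s)`.
-/

section BarMul

variable (A : Type) [NonUnitalRing A] [Module ℂ A] [SMulCommClass ℂ A A] [IsScalarTower ℂ A A]

theorem barD_tmul (a b c : A) : barD A (a ⊗ₜ (b ⊗ₜ c)) = (a * b) ⊗ₜ c - a ⊗ₜ (b * c) := by
  simp [barD]

theorem mul'_comp_barD : mul' ℂ A ∘ₗ barD A = 0 := by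
  ext a b c
  simp [barD_tmul, mul_assoc]

noncomputable def barMul : ((A ⊗[ℂ] A) ⧸ LinearMap.range (barD A)) →ₗ[ℂ] A :=
  (LinearMap.range (barD A)).liftQ (mul' ℂ A) (range_le_ker_iff.2 (mul'_comp_barD A))

theorem isQuasiUnital_of_bijective_barMul (h : Function.Bijective (barMul A)) :
    IsQuasiUnital A :=
  ⟨barMul A, Submodule.liftQ_mkQ _ _ _, h⟩

variable {A}

theorem mk_mul_tmul (a b c : A) :
    (Submodule.Quotient.mk ((a * b) ⊗ₜ c) : (A ⊗[ℂ] A) ⧸ LinearMap.range (barD A)) =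
      Submodule.Quotient.mk (a ⊗ₜ (b * c)) :=
  (Submodule.Quotient.eq _).2 ⟨a ⊗ₜ (b ⊗ₜ c), barD_tmul A a b c⟩

end BarMul

omit [SMulCommClass ℂ R R] [IsScalarTower ℂ R R] in
@[simp]
theorem actL_tmul (r : R) (x : R') : actL R R' i (r ⊗ₜ x) = i r * x := by
  simp [actL]

omit [SMulCommClass ℂ R R] [IsScalarTower ℂ R R] in
@[simp]
theorem actR_tmul (x : R') (s : R) : actR R R' i (x ⊗ₜ s) = x * i s := by
  simp [actR]

omit [SMulCommClass ℂ R R] [IsScalarTower ℂ R R] in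
@[simp]
theorem actT_tmul (r : R) (x : R') (s : R) :
    actT R R' i (r ⊗ₜ (x ⊗ₜ s)) = i r * x * i s := by
  simp [actT, mul_assoc]

omit [SMulCommClass ℂ R R] [IsScalarTower ℂ R R] in
theorem actR_comp_rTensor_actL_eq_actT :
    actR R R' i ∘ₗ rTensor R (actL R R' i) ∘ₗ (TensorProduct.assoc ℂ R R' R).symm.toLinearMap =
      actT R R' i := by
  ext r x s
  simp

noncomputable def twoSidedToBar : (R ⊗[ℂ] (R' ⊗[ℂ] R)) →ₗ[ℂ] R' ⊗[ℂ] R' :=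
  lTensor R' i ∘ₗ rTensor R (actL R R' i) ∘ₗ (TensorProduct.assoc ℂ R R' R).symm.toLinearMap

omit [SMulCommClass ℂ R R] [IsScalarTower ℂ R R] in
@[simp]
theorem twoSidedToBar_tmul (r : R) (x : R') (s : R) :
    twoSidedToBar R R' i (r ⊗ₜ (x ⊗ₜ s)) = (i r * x) ⊗ₜ i s := by
  simp [twoSidedToBar]

variable {R R' i}

omit [SMulCommClass ℂ R R] [IsScalarTower ℂ R R] in
theorem actL_surjective_of_actT (h : Function.Surjective (actT R R' i)) :
    Function.Surjective (actL R R' i) :=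
  Function.Surjective.of_comp (g := lTensor R (actR R R' i)) h

omit [SMulCommClass ℂ R R] [IsScalarTower ℂ R R] in
theorem actR_surjective_of_actT (h : Function.Surjective (actT R R' i)) :
    Function.Surjective (actR R R' i) := by
  rw [← actR_comp_rTensor_actL_eq_actT] at h
  exact Function.Surjective.of_comp h

theorem twoSidedToBar_comp_barDT₁ (hi : ∀ a b : R, i (a * b) = i a * i b) :
    twoSidedToBar R R' i ∘ₗ barDT₁ R R' i = 0 := by
  ext r a x s
  simp [barDT₁, hi, mul_assoc]

theorem twoSidedToBar_barDT₂_tmul (hi : ∀ a b : R, i (a * b) = i a * i b)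
    (r : R) (x : R') (a b : R) :
    twoSidedToBar R R' i (barDT₂ R R' i (r ⊗ₜ (x ⊗ₜ (a ⊗ₜ b)))) =
      barD R' ((i r * x) ⊗ₜ (i a ⊗ₜ i b)) := by
  simp [barDT₂, barDR, barD_tmul, hi, mul_assoc]

theorem twoSidedRel_le_ker (hi : ∀ a b : R, i (a * b) = i a * i b) :
    twoSidedRel R R' i ≤ ker ((LinearMap.range (barD R')).mkQ ∘ₗ twoSidedToBar R R' i) := by
  refine sup_le ?_ (range_le_ker_iff.2 ?_)
  · rw [range_le_ker_iff, comp_assoc, twoSidedToBar_comp_barDT₁ hi, comp_zero]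
  · ext r x a b
    simpa [Submodule.Quotient.mk_eq_zero] using
      ⟨_, (twoSidedToBar_barDT₂_tmul hi r x a b).symm⟩

variable (i)

noncomputable def twoSidedDescent (hi : ∀ a b : R, i (a * b) = i a * i b) :
    ((R ⊗[ℂ] (R' ⊗[ℂ] R)) ⧸ twoSidedRel R R' i) →ₗ[ℂ]
      (R' ⊗[ℂ] R') ⧸ LinearMap.range (barD R') :=
  (twoSidedRel R R' i).liftQ _ (twoSidedRel_le_ker hi)

theorem twoSidedDescent_mk (hi : ∀ a b : R, i (a * b) = i a * i b) (r : R) (x : R') (s : R) :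
    twoSidedDescent i hi (Submodule.Quotient.mk (r ⊗ₜ (x ⊗ₜ s))) =
      Submodule.Quotient.mk ((i r * x) ⊗ₜ i s) := by
  simp [twoSidedDescent]

theorem barMul_comp_twoSidedDescent_comp_mkQ (hi : ∀ a b : R, i (a * b) = i a * i b) :
    barMul R' ∘ₗ twoSidedDescent i hi ∘ₗ (twoSidedRel R R' i).mkQ = actT R R' i := by
  ext r x s
  simp [twoSidedDescent, barMul, mul_assoc]

theorem mk_actL_tmul_mem_range (hi : ∀ a b : R, i (a * b) = i a * i b) (u : R ⊗[ℂ] R') (s : R) :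
    Submodule.Quotient.mk (actL R R' i u ⊗ₜ i s) ∈ range (twoSidedDescent i hi) := by
  induction u using TensorProduct.induction_on with
  | zero => simp
  | tmul r x => exact ⟨_, twoSidedDescent_mk i hi r x s⟩
  | add u v hu hv => simpa [add_tmul] using add_mem hu hv

theorem twoSidedDescent_surjective (hi : ∀ a b : R, i (a * b) = i a * i b)
    (hT : Function.Surjective (actT R R' i)) :
    Function.Surjective (twoSidedDescent i hi) := by
  have tmul_mem (x y : R') : Submodule.Quotient.mk (x ⊗ₜ y) ∈ range (twoSidedDescent i hi) := by
    obtain ⟨v, rfl⟩ := actR_surjective_of_actT hT y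
    induction v using TensorProduct.induction_on with
    | zero => simp
    | tmul y s =>
      obtain ⟨u, hu⟩ := actL_surjective_of_actT hT (x * y)
      rw [actR_tmul, ← mk_mul_tmul, ← hu]
      exact mk_actL_tmul_mem_range i hi u s
    | add v w hv hw => simpa [tmul_add] using add_mem hv hw
  rw [← range_eq_top, eq_top_iff]
  rintro z -
  obtain ⟨w, rfl⟩ := Submodule.Quotient.mk_surjective _ z
  induction w using TensorProduct.induction_on with
  | zero => simp
  | tmul x y => exact tmul_mem x y
  | add v w hv hw => simpa using add_mem hv hw

variable (R R')

theorem quasiUnital_of_smooth_extension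
    (hi : ∀ a b : R, i (a * b) = i a * i b)
    -- `R ⊗_R R' ⊗_R R → R'` is an isomorphism
    (hT : ∃ fT : ((R ⊗[ℂ] (R' ⊗[ℂ] R)) ⧸ twoSidedRel R R' i) →ₗ[ℂ] R',
      fT ∘ₗ (twoSidedRel R R' i).mkQ = actT R R' i ∧ Function.Bijective fT) :
    IsQuasiUnital R' := by
  obtain ⟨fT, hfT, hbij⟩ := hT
  have hact : Function.Surjective (actT R R' i) := by
    rw [← hfT]
    exact hbij.2.comp (Submodule.mkQ_surjective _)
  have hcomp : barMul R' ∘ₗ twoSidedDescent i hi = fT := Submodule.linearMap_qext _ <| by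
    rw [comp_assoc, barMul_comp_twoSidedDescent_comp_mkQ i hi, hfT]
  have hdesc := twoSidedDescent_surjective i hi hact
  rw [← hcomp, coe_comp] at hbij
  exact isQuasiUnital_of_bijective_barMul R'
    ⟨hbij.1.of_comp_right hdesc, hbij.2.of_comp⟩

end Ext
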